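/- arXiv:2104.14512 — 14 statements merged into one kernel-verified Lean document; each statement's English description precedes it below -/
import Mathlib

section
/- Let ∘ be a base change operator satisfying (G5) and (G6), K a belief base, and ω₁, ω₂ ∈ Ω. If ω₁ ⪯ᵒ_K ω₂ does not hold, then ω₂ ≺ᵒ_K ω₁ and there exists a belief base Γ with ω₁, ω₂ ∈ Mod(Γ) such that ω₂ ∈ Mod(K ∘ Γ) and ω₁ ∉ Mod(K ∘ Γ). -/
namespace BeliefRev

variable {L Ω : Type*}

/-- The models of a belief base (a finite set of sentences). -/
def Mod (sat : Ω → L → Prop) (K : Finset L) : Set Ω :=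
  {ω | ∀ φ ∈ K, sat ω φ}

/-- `min(S, r)`: the elements of `S` that are `r`-below every element of `S`. -/
def minSet (S : Set Ω) (r : Ω → Ω → Prop) : Set Ω :=
  {ω ∈ S | ∀ ω' ∈ S, r ω ω'}

/-- A binary relation is total. -/
def TotalRel (r : Ω → Ω → Prop) : Prop :=
  ∀ ω₁ ω₂, r ω₁ ω₂ ∨ r ω₂ ω₁

/-- The strict part of a relation: `ω₁ ≺ ω₂` iff `ω₁ ⪯ ω₂` and not `ω₂ ⪯ ω₁`. -/
def StrictRel (r : Ω → Ω → Prop) (ω₁ ω₂ : Ω) : Prop :=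
  r ω₁ ω₂ ∧ ¬ r ω₂ ω₁

/-- Postulate (G1). -/
def G1 (sat : Ω → L → Prop) (op : Finset L → Finset L → Finset L) : Prop :=
  ∀ K Γ, Mod sat (op K Γ) ⊆ Mod sat Γ

/-- Postulate (G2). -/
def G2 [DecidableEq L] (sat : Ω → L → Prop) (op : Finset L → Finset L → Finset L) : Prop :=
  ∀ K Γ, (Mod sat (K ∪ Γ)).Nonempty → Mod sat (op K Γ) = Mod sat (K ∪ Γ)

/-- Postulate (G3). -/
def G3 (sat : Ω → L → Prop) (op : Finset L → Finset L → Finset L) : Prop :=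
  ∀ K Γ, (Mod sat Γ).Nonempty → (Mod sat (op K Γ)).Nonempty

/-- Postulate (G4). -/
def G4 (sat : Ω → L → Prop) (op : Finset L → Finset L → Finset L) : Prop :=
  ∀ K₁ K₂ Γ₁ Γ₂, Mod sat K₁ = Mod sat K₂ → Mod sat Γ₁ = Mod sat Γ₂ →
    Mod sat (op K₁ Γ₁) = Mod sat (op K₂ Γ₂)

/-- Postulate (G5). -/
def G5 [DecidableEq L] (sat : Ω → L → Prop) (op : Finset L → Finset L → Finset L) : Prop :=
  ∀ K Γ₁ Γ₂, Mod sat (op K Γ₁) ∩ Mod sat Γ₂ ⊆ Mod sat (op K (Γ₁ ∪ Γ₂))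

/-- Postulate (G6). -/
def G6 [DecidableEq L] (sat : Ω → L → Prop) (op : Finset L → Finset L → Finset L) : Prop :=
  ∀ K Γ₁ Γ₂, (Mod sat (op K Γ₁) ∩ Mod sat Γ₂).Nonempty →
    Mod sat (op K (Γ₁ ∪ Γ₂)) ⊆ Mod sat (op K Γ₁) ∩ Mod sat Γ₂

/-- The conjunction of postulates (G1)–(G6). -/
def AGM [DecidableEq L] (sat : Ω → L → Prop) (op : Finset L → Finset L → Finset L) : Prop :=
  G1 sat op ∧ G2 sat op ∧ G3 sat op ∧ G4 sat op ∧ G5 sat op ∧ G6 sat op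

/-- The canonical relation `⪯ᵒ_K` obtained from a base change operator. -/
def canonicalRel (sat : Ω → L → Prop) (op : Finset L → Finset L → Finset L)
    (K : Finset L) (ω₁ ω₂ : Ω) : Prop :=
  ∀ Γ : Finset L, ω₁ ∈ Mod sat Γ → ω₂ ∈ Mod sat Γ →
    (ω₁ ∈ Mod sat (op K Γ) ∨ ω₂ ∉ Mod sat (op K Γ))

/-- A relation is min-retractive. -/
def MinRetractive (sat : Ω → L → Prop) (r : Ω → Ω → Prop) : Prop :=
  ∀ (Γ : Finset L) (ω ω' : Ω), ω ∈ Mod sat Γ → ω' ∈ Mod sat Γ →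
    r ω' ω → ω ∈ minSet (Mod sat Γ) r → ω' ∈ minSet (Mod sat Γ) r

/-- A relation is min-complete. -/
def MinComplete (sat : Ω → L → Prop) (r : Ω → Ω → Prop) : Prop :=
  ∀ Γ : Finset L, (Mod sat Γ).Nonempty → (minSet (Mod sat Γ) r).Nonempty

/-- A relation is min-friendly: min-retractive and min-complete. -/
def MinFriendly (sat : Ω → L → Prop) (r : Ω → Ω → Prop) : Prop :=
  MinRetractive sat r ∧ MinComplete sat r

/-- A relation is min-expressible. -/
def MinExpressible (sat : Ω → L → Prop) (r : Ω → Ω → Prop) : Prop :=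
  ∀ Γ : Finset L, ∃ B : Finset L, Mod sat B = minSet (Mod sat Γ) r

/-- An assignment maps each belief base to a *total* relation on interpretations. -/
def IsAssignment (assign : Finset L → Ω → Ω → Prop) : Prop :=
  ∀ K : Finset L, TotalRel (assign K)

/-- Faithfulness of an assignment: conditions (F1), (F2) and (F3). -/
def Faithful (sat : Ω → L → Prop) (assign : Finset L → Ω → Ω → Prop) : Prop :=
  (∀ (K : Finset L) (ω ω' : Ω), ω ∈ Mod sat K → ω' ∈ Mod sat K →
      ¬ StrictRel (assign K) ω ω') ∧
  (∀ (K : Finset L) (ω ω' : Ω), ω ∈ Mod sat K → ω' ∉ Mod sat K →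
      StrictRel (assign K) ω ω') ∧
  (∀ K K' : Finset L, Mod sat K = Mod sat K' → assign K = assign K')

/-- Compatibility of a base change operator with an assignment. -/
def Compatible (sat : Ω → L → Prop) (op : Finset L → Finset L → Finset L)
    (assign : Finset L → Ω → Ω → Prop) : Prop :=
  ∀ K Γ : Finset L, Mod sat (op K Γ) = minSet (Mod sat Γ) (assign K)

/-- Total preorder representability: there is a faithful assignment compatible with `op`
whose relations are all min-complete and transitive (hence total preorders). -/
def TotalPreorderRepresentable (sat : Ω → L → Prop)
    (op : Finset L → Finset L → Finset L) : Prop :=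
  ∃ assign : Finset L → Ω → Ω → Prop,
    IsAssignment assign ∧ Faithful sat assign ∧
    (∀ K : Finset L, MinComplete sat (assign K)) ∧
    (∀ K : Finset L, Transitive (assign K)) ∧
    Compatible sat op assign

/-- A pair of interpretations is detached from `op` in `K`. -/
def Detached (sat : Ω → L → Prop) (op : Finset L → Finset L → Finset L)
    (K : Finset L) (ω ω' : Ω) : Prop :=
  ∀ Γ : Finset L, ω ∉ Mod sat (op K Γ) ∧ ω' ∉ Mod sat (op K Γ)

/-- Three belief bases form a critical loop for the logic. -/
def CriticalLoop [DecidableEq L] (sat : Ω → L → Prop) (Γ₀ Γ₁ Γ₂ : Finset L) : Prop :=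
  ∃ K Γ'₀ Γ'₁ Γ'₂ : Finset L,
    (Mod sat (K ∪ Γ₀) = ∅ ∧ Mod sat (K ∪ Γ₁) = ∅ ∧ Mod sat (K ∪ Γ₂) = ∅) ∧
    ((Mod sat Γ'₀).Nonempty ∧ Mod sat Γ'₀ ⊆ (Mod sat Γ₀ ∩ Mod sat Γ₁) \ Mod sat Γ₂) ∧
    ((Mod sat Γ'₁).Nonempty ∧ Mod sat Γ'₁ ⊆ (Mod sat Γ₁ ∩ Mod sat Γ₂) \ Mod sat Γ₀) ∧
    ((Mod sat Γ'₂).Nonempty ∧ Mod sat Γ'₂ ⊆ (Mod sat Γ₂ ∩ Mod sat Γ₀) \ Mod sat Γ₁) ∧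
    (∀ Γ : Finset L, (Mod sat (Γ'₀ ∪ Γ)).Nonempty → (Mod sat (Γ'₁ ∪ Γ)).Nonempty →
      (Mod sat (Γ'₂ ∪ Γ)).Nonempty →
      ∃ Γ' : Finset L, (Mod sat Γ').Nonempty ∧
        Mod sat Γ' ⊆ Mod sat Γ \ (Mod sat Γ₀ ∪ Mod sat Γ₁ ∪ Mod sat Γ₂))

/-- The logic admits (exhibits) a critical loop. -/
def AdmitsCriticalLoop [DecidableEq L] (sat : Ω → L → Prop) : Prop :=
  ∃ Γ₀ Γ₁ Γ₂ : Finset L, CriticalLoop sat Γ₀ Γ₁ Γ₂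

/-- A logic is disjunctive: any two bases have a base acting as their disjunction. -/
def Disjunctive (sat : Ω → L → Prop) : Prop :=
  ∀ Γ₁ Γ₂ : Finset L, ∃ Δ : Finset L, Mod sat Δ = Mod sat Γ₁ ∪ Mod sat Γ₂
/-- If `∘` satisfies (G5) and (G6) and `ω₁ ⪯ᵒ_K ω₂` fails, then
`ω₂ ≺ᵒ_K ω₁` and some base `Γ` with `ω₁, ω₂ ∈ Mod(Γ)` witnesses
`ω₂ ∈ Mod(K ∘ Γ)` and `ω₁ ∉ Mod(K ∘ Γ)`. -/
theorem canonicalRel_not_le {L Ω : Type*} [DecidableEq L] (sat : Ω → L → Prop)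
    (op : Finset L → Finset L → Finset L)
    (h5 : G5 sat op) (h6 : G6 sat op) (K : Finset L) (ω₁ ω₂ : Ω)
    (h : ¬ canonicalRel sat op K ω₁ ω₂) :
    StrictRel (canonicalRel sat op K) ω₂ ω₁ ∧
      ∃ Γ : Finset L, ω₁ ∈ Mod sat Γ ∧ ω₂ ∈ Mod sat Γ ∧
        ω₂ ∈ Mod sat (op K Γ) ∧ ω₁ ∉ Mod sat (op K Γ) := by
  simp only [canonicalRel, not_forall] at h
  obtain ⟨Γ, h1, h2, hΓ⟩ := h
  push_neg at hΓ
  obtain ⟨h1n, h2y⟩ := hΓ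
  have hrel : canonicalRel sat op K ω₂ ω₁ := by
    intro Δ hω₂Δ hω₁Δ
    by_cases hω₁ : ω₁ ∈ Mod sat (op K Δ)
    · left
      -- ω₁ ∈ Mod(op K Δ) ∩ Mod Γ, so by G5 ω₁ ∈ Mod(op K (Δ ∪ Γ))
      have hω₁u : ω₁ ∈ Mod sat (op K (Δ ∪ Γ)) := h5 K Δ Γ ⟨hω₁, h1⟩
      -- ω₂ ∈ Mod(op K Γ) ∩ Mod Δ, so by G5 ω₂ ∈ Mod(op K (Γ ∪ Δ))
      have hω₂u : ω₂ ∈ Mod sat (op K (Δ ∪ Γ)) := by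
        have := h5 K Γ Δ ⟨h2y, hω₂Δ⟩
        rwa [Finset.union_comm]
      -- by G6, Mod(op K (Δ ∪ Γ)) ⊆ Mod(op K Δ)
      have := h6 K Δ Γ ⟨ω₁, hω₁, h1⟩ hω₂u
      exact this.1
    · right; exact hω₁
  refine ⟨⟨hrel, ?_⟩, Γ, h1, h2, h2y, h1n⟩
  intro hc
  rcases hc Γ h1 h2 with h' | h'
  · exact h1n h'
  · exact h' h2y

end BeliefRev
end

section
/- Let ∘ be a base change operator satisfying (G5) and (G6) and K a belief base. If there is a belief base Γ with ω₁, ω₂ ∈ Mod(Γ) such that ω₁ ∈ Mod(K ∘ Γ), then ω₁ ⪯ᵒ_K ω₂. -/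
namespace BeliefRev

variable {L Ω : Type*}

/-- If `∘` satisfies (G5) and (G6) and there is a base `Γ` with
`ω₁, ω₂ ∈ Mod(Γ)` such that `ω₁ ∈ Mod(K ∘ Γ)`, then `ω₁ ⪯ᵒ_K ω₂`. -/
theorem canonicalRel_of_mem {L Ω : Type*} [DecidableEq L] (sat : Ω → L → Prop)
    (op : Finset L → Finset L → Finset L)
    (h5 : G5 sat op) (h6 : G6 sat op) (K : Finset L) (ω₁ ω₂ : Ω)
    (h : ∃ Γ : Finset L, ω₁ ∈ Mod sat Γ ∧ ω₂ ∈ Mod sat Γ ∧ ω₁ ∈ Mod sat (op K Γ)) :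
    canonicalRel sat op K ω₁ ω₂ := by
  obtain ⟨Γ, h1, h2, h3⟩ := h
  intro Δ hd1 hd2
  by_cases hw2 : ω₂ ∈ Mod sat (op K Δ)
  · left
    have e1 : ω₁ ∈ Mod sat (op K (Γ ∪ Δ)) := h5 K Γ Δ ⟨h3, hd1⟩
    rw [Finset.union_comm] at e1
    exact (h6 K Δ Γ ⟨ω₂, hw2, h2⟩ e1).1
  · right; exact hw2

end BeliefRev
end

section
/- Let ∘ be a base change operator satisfying (G5) and (G6) and K a belief base. If there is a belief base Γ with ω₁, ω₂ ∈ Mod(Γ) such that ω₁ ∈ Mod(K ∘ Γ) and ω₂ ∉ Mod(K ∘ Γ), then ω₁ ≺ᵒ_K ω₂. -/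
namespace BeliefRev

variable {L Ω : Type*}

/-- If `∘` satisfies (G5) and (G6) and there is a base `Γ` with
`ω₁, ω₂ ∈ Mod(Γ)` such that `ω₁ ∈ Mod(K ∘ Γ)` and `ω₂ ∉ Mod(K ∘ Γ)`,
then `ω₁ ≺ᵒ_K ω₂`. -/
theorem canonicalRel_strict_of_mem {L Ω : Type*} [DecidableEq L] (sat : Ω → L → Prop)
    (op : Finset L → Finset L → Finset L)
    (h5 : G5 sat op) (h6 : G6 sat op) (K : Finset L) (ω₁ ω₂ : Ω)
    (h : ∃ Γ : Finset L, ω₁ ∈ Mod sat Γ ∧ ω₂ ∈ Mod sat Γ ∧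
        ω₁ ∈ Mod sat (op K Γ) ∧ ω₂ ∉ Mod sat (op K Γ)) :
    StrictRel (canonicalRel sat op K) ω₁ ω₂ := by
  obtain ⟨Γ, hω₁Γ, hω₂Γ, h1, h2⟩ := h
  constructor
  · intro Δ hω₁Δ hω₂Δ
    right
    intro hω₂
    apply h2
    have hsub := h6 K Γ Δ ⟨ω₁, h1, hω₁Δ⟩
    have h5' := h5 K Δ Γ ⟨hω₂, hω₂Γ⟩
    have : (Δ ∪ Γ) = (Γ ∪ Δ) := Finset.union_comm _ _
    rw [this] at h5'
    exact (hsub h5').1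
  · intro hc
    rcases hc Γ hω₂Γ hω₁Γ with h' | h'
    · exact h2 h'
    · exact h' h1

end BeliefRev
end

section
/- If a base change operator ∘ satisfies (G1), (G3), (G5), and (G6), then for all belief bases K and Γ it holds that Mod(K ∘ Γ) = min(Mod(Γ), ⪯ᵒ_K), i.e., ∘ is compatible with the canonical assignment K ↦ ⪯ᵒ_K. -/
namespace BeliefRev

variable {L Ω : Type*}

/-- If `∘` satisfies (G1), (G3), (G5) and (G6), then
`Mod(K ∘ Γ) = min(Mod(Γ), ⪯ᵒ_K)` for all `K`, `Γ`, i.e. `∘` is compatible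
with the canonical assignment. -/
theorem canonical_compatible {L Ω : Type*} [DecidableEq L] (sat : Ω → L → Prop)
    (op : Finset L → Finset L → Finset L)
    (h1 : G1 sat op) (h3 : G3 sat op) (h5 : G5 sat op) (h6 : G6 sat op) :
    Compatible sat op (canonicalRel sat op) := by
  intro K Γ
  ext ω
  constructor
  · intro hω
    have hωΓ : ω ∈ Mod sat Γ := h1 K Γ hω
    refine ⟨hωΓ, fun ω' hω' => ?_⟩
    intro Γ' hωΓ' hω'Γ'
    by_cases hc : ω' ∈ Mod sat (op K Γ')
    · left
      have hne : (Mod sat (op K Γ') ∩ Mod sat Γ).Nonempty := ⟨ω', hc, hω'⟩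
      have h6' := h6 K Γ' Γ hne
      have h5' := h5 K Γ Γ' ⟨hω, hωΓ'⟩
      have : ω ∈ Mod sat (op K (Γ' ∪ Γ)) := by
        rwa [Finset.union_comm] at h5'
      exact (h6' this).1
    · right; exact hc
  · rintro ⟨hωΓ, hmin⟩
    obtain ⟨ω'', hω''⟩ := h3 K Γ ⟨ω, hωΓ⟩
    have hω''Γ : ω'' ∈ Mod sat Γ := h1 K Γ hω''
    rcases hmin ω'' hω''Γ Γ hωΓ hω''Γ with h | h
    · exact h
    · exact absurd hω'' h


end BeliefRev
end

section
/- If a base change operator ∘ satisfies (G1), (G3), (G5), and (G6), then the canonical relation ⪯ᵒ_K is min-friendly (i.e., min-retractive and min-complete) for every belief base K. -/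
namespace BeliefRev

variable {L Ω : Type*}

/-- If `∘` satisfies (G1), (G3), (G5) and (G6), then the canonical
relation `⪯ᵒ_K` is min-friendly for every belief base `K`. -/
theorem canonical_minFriendly {L Ω : Type*} [DecidableEq L] (sat : Ω → L → Prop)
    (op : Finset L → Finset L → Finset L)
    (h1 : G1 sat op) (h3 : G3 sat op) (h5 : G5 sat op) (h6 : G6 sat op) :
    ∀ K : Finset L, MinFriendly sat (canonicalRel sat op K) := by
  intro K
  -- Key lemma: every model of `op K Γ` is minimal in `Mod Γ`.
  have key : ∀ Γ : Finset L, ∀ ω ∈ Mod sat (op K Γ),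
      ω ∈ minSet (Mod sat Γ) (canonicalRel sat op K) := by
    intro Γ ω hω
    refine ⟨h1 K Γ hω, ?_⟩
    intro ω' hω' Γ' hωΓ' hω'Γ'
    by_cases hω'op : ω' ∈ Mod sat (op K Γ')
    case neg => exact Or.inr hω'op
    left
    have hmemω : ω ∈ Mod sat (op K Γ) ∩ Mod sat Γ' := ⟨hω, hωΓ'⟩
    have hωu : ω ∈ Mod sat (op K (Γ ∪ Γ')) := h5 K Γ Γ' hmemω
    have hne : (Mod sat (op K Γ') ∩ Mod sat Γ).Nonempty := ⟨ω', hω'op, hω'⟩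
    have := h6 K Γ' Γ hne
    have : ω ∈ Mod sat (op K Γ') ∩ Mod sat Γ := by
      apply this
      rwa [Finset.union_comm]
    exact this.1
  constructor
  · -- min-retractive
    intro Γ ω ω' hω hω' hrel hmin
    have hne : (Mod sat Γ).Nonempty := ⟨ω, hω⟩
    obtain ⟨ω₀, hω₀⟩ := h3 K Γ hne
    have hω₀Γ : ω₀ ∈ Mod sat Γ := h1 K Γ hω₀
    -- ω is minimal, so ω ⪯ ω₀, hence ω ∈ Mod (op K Γ)
    have hωop : ω ∈ Mod sat (op K Γ) := by
      rcases hmin.2 ω₀ hω₀Γ Γ hω hω₀Γ with h | h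
      · exact h
      · exact absurd hω₀ h
    have hω'op : ω' ∈ Mod sat (op K Γ) := by
      rcases hrel Γ hω' hω with h | h
      · exact h
      · exact absurd hωop h
    exact key Γ ω' hω'op
  · -- min-complete
    intro Γ hne
    obtain ⟨ω, hω⟩ := h3 K Γ hne
    exact ⟨ω, key Γ ω hω⟩

end BeliefRev
end

section
/- If a base change operator ∘ satisfies (G2), (G4), (G5), and (G6), then the canonical assignment K ↦ ⪯ᵒ_K is faithful, i.e., it satisfies conditions (F1), (F2), and (F3). -/
namespace BeliefRev

variable {L Ω : Type*}

/-- If `∘` satisfies (G2), (G4), (G5) and (G6), then the canonical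
assignment `K ↦ ⪯ᵒ_K` is faithful. -/
theorem canonical_faithful {L Ω : Type*} [DecidableEq L] (sat : Ω → L → Prop)
    (op : Finset L → Finset L → Finset L)
    (h2 : G2 sat op) (h4 : G4 sat op) (h5 : G5 sat op) (h6 : G6 sat op) :
    Faithful sat (canonicalRel sat op) := by
  have hmod : ∀ K Γ : Finset L, Mod sat (K ∪ Γ) = Mod sat K ∩ Mod sat Γ := by
    intro K Γ
    ext ω
    simp only [Mod, Set.mem_setOf_eq, Set.mem_inter_iff, Finset.mem_union]
    constructor
    · intro h; exact ⟨fun φ hφ => h φ (Or.inl hφ), fun φ hφ => h φ (Or.inr hφ)⟩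
    · rintro ⟨h1, h2⟩ φ (hφ | hφ); exacts [h1 φ hφ, h2 φ hφ]
  refine ⟨?_, ?_, ?_⟩
  · -- F1
    intro K ω ω' hω hω' hstrict
    apply hstrict.2
    intro Γ hω'Γ hωΓ
    left
    have hne : (Mod sat (K ∪ Γ)).Nonempty := ⟨ω', by rw [hmod]; exact ⟨hω', hω'Γ⟩⟩
    rw [h2 K Γ hne, hmod]
    exact ⟨hω', hω'Γ⟩
  · -- F2
    intro K ω ω' hω hω'
    constructor
    · intro Γ hωΓ hω'Γ
      left
      have hne : (Mod sat (K ∪ Γ)).Nonempty := ⟨ω, by rw [hmod]; exact ⟨hω, hωΓ⟩⟩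
      rw [h2 K Γ hne, hmod]
      exact ⟨hω, hωΓ⟩
    · intro hrel
      have hem : ∀ x : Ω, x ∈ Mod sat (∅ : Finset L) := by
        intro x φ hφ; simp at hφ
      have := hrel ∅ (hem ω') (hem ω)
      have heq : Mod sat (op K ∅) = Mod sat (K ∪ ∅) := h2 K ∅ ⟨ω, by rw [hmod]; exact ⟨hω, hem ω⟩⟩
      rw [heq, hmod] at this
      rcases this with h | h
      · exact hω' h.1
      · exact h ⟨hω, hem ω⟩
  · -- F3
    intro K K' hKK'
    funext ω₁ ω₂
    have hop : ∀ Γ : Finset L, Mod sat (op K Γ) = Mod sat (op K' Γ) :=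
      fun Γ => h4 K K' Γ Γ hKK' rfl
    simp only [canonicalRel, hop]

end BeliefRev
end

section
/- If a base change operator ∘ satisfies (G1)–(G6), then the canonical assignment K ↦ ⪯ᵒ_K is an assignment (each ⪯ᵒ_K is total) that is min-friendly, faithful, and compatible with ∘. -/
namespace BeliefRev

variable {L Ω : Type*}

/-- If `∘` satisfies (G1)–(G6), then the canonical assignment
`K ↦ ⪯ᵒ_K` is an assignment (each relation total) that is min-friendly,
faithful and compatible with `∘`. -/
theorem canonical_assignment {L Ω : Type*} [DecidableEq L] (sat : Ω → L → Prop)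
    (op : Finset L → Finset L → Finset L) (h : AGM sat op) :
    IsAssignment (canonicalRel sat op) ∧
      (∀ K : Finset L, MinFriendly sat (canonicalRel sat op K)) ∧
      Faithful sat (canonicalRel sat op) ∧
      Compatible sat op (canonicalRel sat op) := by
  obtain ⟨h1, h2, h3, h4, h5, h6⟩ := h
  have modU : ∀ (A B : Finset L) (ω : Ω),
      ω ∈ Mod sat (A ∪ B) ↔ ω ∈ Mod sat A ∧ ω ∈ Mod sat B := by
    intro A B ω
    constructor
    · intro hh
      exact ⟨fun φ hφ => hh φ (Finset.mem_union_left _ hφ),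
             fun φ hφ => hh φ (Finset.mem_union_right _ hφ)⟩
    · rintro ⟨ha, hb⟩ φ hφ
      rcases Finset.mem_union.mp hφ with h' | h'
      · exact ha φ h'
      · exact hb φ h'
  have transfer : ∀ (K Γ Δ : Finset L) (ω : Ω), ω ∈ Mod sat (op K Γ) →
      ω ∈ Mod sat Δ → (Mod sat (op K Δ) ∩ Mod sat Γ).Nonempty →
      ω ∈ Mod sat (op K Δ) := by
    intro K Γ Δ ω hω1 hω2 hne
    have hx : ω ∈ Mod sat (op K (Γ ∪ Δ)) := h5 K Γ Δ ⟨hω1, hω2⟩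
    rw [Finset.union_comm] at hx
    exact ((h6 K Δ Γ hne) hx).1
  have compat : Compatible sat op (canonicalRel sat op) := by
    intro K Γ
    ext ω
    constructor
    · intro hω
      refine ⟨h1 K Γ hω, ?_⟩
      intro ω' hω' Δ hωΔ hω'Δ
      by_cases hcase : ω' ∈ Mod sat (op K Δ)
      · exact Or.inl (transfer K Γ Δ ω hω hωΔ ⟨ω', hcase, hω'⟩)
      · exact Or.inr hcase
    · rintro ⟨hωΓ, hmin⟩
      obtain ⟨ω₀, hω₀⟩ := h3 K Γ ⟨ω, hωΓ⟩
      rcases hmin ω₀ (h1 K Γ hω₀) Γ hωΓ (h1 K Γ hω₀) with hh | hh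
      · exact hh
      · exact absurd hω₀ hh
  refine ⟨?_, ?_, ⟨?_, ?_, ?_⟩, compat⟩
  · -- totality
    intro K ω₁ ω₂
    by_cases hc : canonicalRel sat op K ω₁ ω₂
    · exact Or.inl hc
    · right
      unfold canonicalRel at hc
      push_neg at hc
      obtain ⟨Γ, hΓ₁, hΓ₂, hnA, hB⟩ := hc
      intro Δ hΔ₂ hΔ₁
      by_cases hx : ω₁ ∈ Mod sat (op K Δ)
      · exact Or.inl (transfer K Γ Δ ω₂ hB hΔ₂ ⟨ω₁, hx, hΓ₁⟩)
      · exact Or.inr hx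
  · -- min-friendly
    intro K
    constructor
    · intro Γ ω ω' hω hω' hle hmin
      have heq := compat K Γ
      rw [← heq] at hmin ⊢
      rcases hle Γ hω' hω with hh | hh
      · exact hh
      · exact absurd hmin hh
    · intro Γ hne
      rw [← compat K Γ]
      exact h3 K Γ hne
  · -- F1
    intro K ω ω' hω hω' hs
    apply hs.2
    intro Γ hΓ' hΓ
    left
    have hmem : ω' ∈ Mod sat (K ∪ Γ) := (modU K Γ ω').mpr ⟨hω', hΓ'⟩
    rw [h2 K Γ ⟨ω', hmem⟩]
    exact hmem
  · -- F2
    intro K ω ω' hω hω'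
    constructor
    · intro Γ hΓ hΓ'
      left
      have hmem : ω ∈ Mod sat (K ∪ Γ) := (modU K Γ ω).mpr ⟨hω, hΓ⟩
      rw [h2 K Γ ⟨ω, hmem⟩]
      exact hmem
    · intro hle
      have hemp : ∀ ψ : Ω, ψ ∈ Mod sat (∅ : Finset L) :=
        fun ψ φ hφ => absurd hφ (Finset.notMem_empty φ)
      have hKe : (K ∪ (∅ : Finset L)) = K := Finset.union_empty K
      have hne : (Mod sat (K ∪ (∅ : Finset L))).Nonempty := by
        rw [hKe]; exact ⟨ω, hω⟩
      have heq := h2 K ∅ hne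
      rw [hKe] at heq
      rcases hle ∅ (hemp ω') (hemp ω) with hh | hh
      · rw [heq] at hh; exact hω' hh
      · rw [heq] at hh; exact hh hω
  · -- F3
    intro K K' heq
    have hop : ∀ Γ, Mod sat (op K Γ) = Mod sat (op K' Γ) :=
      fun Γ => h4 K K' Γ Γ heq rfl
    funext ω₁ ω₂
    apply propext
    unfold canonicalRel
    constructor
    · intro hh Γ a b; rw [← hop Γ]; exact hh Γ a b
    · intro hh Γ a b; rw [hop Γ]; exact hh Γ a b

end BeliefRev
end

section
/- If there exists a min-friendly faithful assignment compatible with a base change operator ∘, then ∘ satisfies postulates (G1)–(G6). -/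
namespace BeliefRev

variable {L Ω : Type*}

/-- If there exists a min-friendly faithful assignment compatible
with `∘`, then `∘` satisfies (G1)–(G6). -/
theorem agm_of_assignment {L Ω : Type*} [DecidableEq L] (sat : Ω → L → Prop)
    (op : Finset L → Finset L → Finset L)
    (h : ∃ assign : Finset L → Ω → Ω → Prop,
      IsAssignment assign ∧ (∀ K : Finset L, MinFriendly sat (assign K)) ∧
      Faithful sat assign ∧ Compatible sat op assign) :
    AGM sat op := by
  obtain ⟨a, hTot, hMF, ⟨hF1, hF2, hF3⟩, hC⟩ := h
  have hUnion : ∀ A B : Finset L, Mod sat (A ∪ B) = Mod sat A ∩ Mod sat B := by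
    intro A B
    ext ω
    simp only [Mod, Set.mem_setOf_eq, Set.mem_inter_iff, Finset.mem_union]
    constructor
    · intro h; exact ⟨fun φ hφ => h φ (Or.inl hφ), fun φ hφ => h φ (Or.inr hφ)⟩
    · rintro ⟨h1, h2⟩ φ (hφ | hφ); exacts [h1 φ hφ, h2 φ hφ]
  refine ⟨?_, ?_, ?_, ?_, ?_, ?_⟩
  · -- G1
    intro K Γ ω hω
    rw [hC] at hω
    exact hω.1
  · -- G2
    intro K Γ ⟨ω₀, hω₀⟩
    rw [hC, hUnion]
    rw [hUnion] at hω₀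
    ext ω
    constructor
    · rintro ⟨hωΓ, hmin⟩
      refine ⟨?_, hωΓ⟩
      by_contra hωK
      have hstrict := hF2 K ω₀ ω hω₀.1 hωK
      exact hstrict.2 (hmin ω₀ hω₀.2)
    · rintro ⟨hωK, hωΓ⟩
      refine ⟨hωΓ, fun ω' hω' => ?_⟩
      by_cases hω'K : ω' ∈ Mod sat K
      · by_contra hno
        rcases hTot K ω ω' with h | h
        · exact hno h
        · exact hF1 K ω' ω hω'K hωK ⟨h, hno⟩
      · exact (hF2 K ω ω' hωK hω'K).1
  · -- G3
    intro K Γ hne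
    rw [hC]
    exact (hMF K).2 Γ hne
  · -- G4
    intro K₁ K₂ Γ₁ Γ₂ hK hΓ
    rw [hC, hC, hF3 K₁ K₂ hK, hΓ]
  · -- G5
    intro K Γ₁ Γ₂ ω hω
    rw [hC] at hω ⊢
    rw [hUnion]
    obtain ⟨⟨hω1, hmin⟩, hω2⟩ := hω
    exact ⟨⟨hω1, hω2⟩, fun ω' hω' => hmin ω' hω'.1⟩
  · -- G6
    intro K Γ₁ Γ₂ ⟨ω₀, hω₀⟩ ω hω
    rw [hC] at hω₀ hω
    rw [hUnion] at hω
    obtain ⟨hmin₀, hω₀2⟩ := hω₀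
    obtain ⟨h01, h02⟩ := hmin₀
    obtain ⟨⟨hω1, hω2⟩, hmin⟩ := hω
    have hωle : a K ω ω₀ := hmin ω₀ ⟨h01, hω₀2⟩
    have : ω ∈ minSet (Mod sat Γ₁) (a K) :=
      (hMF K).1 Γ₁ ω₀ ω h01 hω1 hωle ⟨h01, h02⟩
    rw [hC]
    exact ⟨this, hω2⟩

end BeliefRev
end

section
/- Representation theorem: a base change operator ∘ satisfies postulates (G1)–(G6) if and only if it is compatible with some min-friendly faithful assignment. -/
namespace BeliefRev

variable {L Ω : Type*}

section Aux

variable {L' Ω' : Type*} [DecidableEq L']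

lemma mod_union (sat : Ω' → L' → Prop) (K Γ : Finset L') :
    Mod sat (K ∪ Γ) = Mod sat K ∩ Mod sat Γ := by
  ext ω
  simp only [Mod, Set.mem_setOf_eq, Set.mem_inter_iff, Finset.mem_union]
  constructor
  · intro h; exact ⟨fun φ hφ => h φ (Or.inl hφ), fun φ hφ => h φ (Or.inr hφ)⟩
  · rintro ⟨h1, h2⟩ φ (h | h); exacts [h1 φ h, h2 φ h]

lemma mem_mod_empty (sat : Ω' → L' → Prop) (ω : Ω') : ω ∈ Mod sat (∅ : Finset L') :=
  fun φ hφ => absurd hφ (Finset.notMem_empty φ)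

lemma merge_lemma {sat : Ω' → L' → Prop} {op : Finset L' → Finset L' → Finset L'}
    (h5 : G5 sat op) (h6 : G6 sat op) {K Γ₁ Γ₂ : Finset L'}
    (h : (Mod sat (op K Γ₁) ∩ Mod sat Γ₂).Nonempty) :
    Mod sat (op K (Γ₁ ∪ Γ₂)) = Mod sat (op K Γ₁) ∩ Mod sat Γ₂ :=
  Set.Subset.antisymm (h6 K Γ₁ Γ₂ h) (h5 K Γ₁ Γ₂)

end Aux

/-- Representation theorem: `∘` satisfies (G1)–(G6) iff it is
compatible with some min-friendly faithful assignment. -/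
theorem representation_theorem {L Ω : Type*} [DecidableEq L] (sat : Ω → L → Prop)
    (op : Finset L → Finset L → Finset L) :
    AGM sat op ↔
      ∃ assign : Finset L → Ω → Ω → Prop,
        IsAssignment assign ∧ (∀ K : Finset L, MinFriendly sat (assign K)) ∧
        Faithful sat assign ∧ Compatible sat op assign := by
  constructor
  · rintro ⟨h1, h2, h3, h4, h5, h6⟩
    have compat : Compatible sat op (canonicalRel sat op) := by
      intro K Γ
      ext ω
      constructor
      · intro hω
        have hΓ : ω ∈ Mod sat Γ := h1 K Γ hω
        refine ⟨hΓ, fun ω' hω' => ?_⟩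
        intro Γ' hω1 hω2
        by_contra hc
        push_neg at hc
        obtain ⟨hno, hyes⟩ := hc
        have e1 : Mod sat (op K (Γ ∪ Γ')) = Mod sat (op K Γ) ∩ Mod sat Γ' :=
          merge_lemma h5 h6 ⟨ω, hω, hω1⟩
        have e2 : Mod sat (op K (Γ' ∪ Γ)) = Mod sat (op K Γ') ∩ Mod sat Γ :=
          merge_lemma h5 h6 ⟨ω', hyes, hω'⟩
        rw [Finset.union_comm] at e1
        have : ω ∈ Mod sat (op K Γ') ∩ Mod sat Γ := by
          rw [← e2, e1]; exact ⟨hω, hω1⟩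
        exact hno this.1
      · rintro ⟨hΓ, hmin⟩
        obtain ⟨ω', hω'⟩ := h3 K Γ ⟨ω, hΓ⟩
        have hω'Γ : ω' ∈ Mod sat Γ := h1 K Γ hω'
        rcases hmin ω' hω'Γ Γ hΓ hω'Γ with h | h
        · exact h
        · exact absurd hω' h
    refine ⟨canonicalRel sat op, ?_, ?_, ⟨?_, ?_, ?_⟩, compat⟩
    · -- totality
      intro K ω₁ ω₂
      by_contra hc
      push_neg at hc
      obtain ⟨hn1, hn2⟩ := hc
      simp only [canonicalRel, not_forall, not_or, not_not] at hn1 hn2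
      obtain ⟨Γa, ha1, ha2, ha3, ha4⟩ := hn1
      obtain ⟨Γb, hb2, hb1, hb3, hb4⟩ := hn2
      have e1 : Mod sat (op K (Γa ∪ Γb)) = Mod sat (op K Γa) ∩ Mod sat Γb :=
        merge_lemma h5 h6 ⟨ω₂, ha4, hb2⟩
      have e2 : Mod sat (op K (Γb ∪ Γa)) = Mod sat (op K Γb) ∩ Mod sat Γa :=
        merge_lemma h5 h6 ⟨ω₁, hb4, ha1⟩
      rw [Finset.union_comm] at e1
      have : ω₂ ∈ Mod sat (op K Γb) ∩ Mod sat Γa := by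
        rw [← e2, e1]; exact ⟨ha4, hb2⟩
      exact hb3 this.1
    · -- min-friendly
      intro K
      constructor
      · intro Γ ω ω' hω hω' hr hmin
        rw [← compat K Γ] at hmin ⊢
        rcases hr Γ hω' hω with h | h
        · exact h
        · exact absurd hmin h
      · intro Γ hne
        obtain ⟨ω, hω⟩ := h3 K Γ hne
        exact ⟨ω, (compat K Γ) ▸ hω⟩
    · -- F1
      rintro K ω ω' hω hω' ⟨hab, hnba⟩
      apply hnba
      intro Γ hΓ1 hΓ2
      left
      have hEq : Mod sat (op K Γ) = Mod sat (K ∪ Γ) := h2 K Γ (by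
        rw [mod_union]; exact ⟨ω', hω', hΓ1⟩)
      rw [hEq, mod_union]; exact ⟨hω', hΓ1⟩
    · -- F2
      intro K ω ω' hω hω'
      have hEqE : Mod sat (op K (∅ : Finset L)) = Mod sat (K ∪ (∅ : Finset L)) :=
        h2 K ∅ (by rw [mod_union]; exact ⟨ω, hω, mem_mod_empty sat ω⟩)
      rw [Finset.union_empty] at hEqE
      constructor
      · intro Γ hΓ1 hΓ2
        left
        have hEq : Mod sat (op K Γ) = Mod sat (K ∪ Γ) := h2 K Γ (by
          rw [mod_union]; exact ⟨ω, hω, hΓ1⟩)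
        rw [hEq, mod_union]; exact ⟨hω, hΓ1⟩
      · intro hba
        rcases hba ∅ (mem_mod_empty sat ω') (mem_mod_empty sat ω) with h | h
        · rw [hEqE] at h; exact hω' h
        · rw [hEqE] at h; exact h hω
    · -- F3
      intro K K' hKK'
      have key : ∀ Γ, Mod sat (op K Γ) = Mod sat (op K' Γ) :=
        fun Γ => h4 K K' Γ Γ hKK' rfl
      funext ω₁ ω₂
      simp only [canonicalRel, key]
  · rintro ⟨a, hTot, hMF, ⟨hF1, hF2, hF3⟩, hComp⟩
    have hle : ∀ (K : Finset L) (ω ω' : Ω), ω ∈ Mod sat K → a K ω ω' := by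
      intro K ω ω' hω
      by_cases hω' : ω' ∈ Mod sat K
      · rcases hTot K ω ω' with h | h
        · exact h
        · by_contra hn
          exact hF1 K ω' ω hω' hω ⟨h, hn⟩
      · exact (hF2 K ω ω' hω hω').1
    refine ⟨?_, ?_, ?_, ?_, ?_, ?_⟩
    · -- G1
      intro K Γ
      rw [hComp]
      exact fun ω hω => hω.1
    · -- G2
      intro K Γ hne
      rw [mod_union] at hne ⊢
      rw [hComp]
      obtain ⟨ω₀, hω₀K, hω₀Γ⟩ := hne
      ext ω
      constructor
      · rintro ⟨hΓ, hmin⟩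
        refine ⟨?_, hΓ⟩
        by_contra hωK
        exact (hF2 K ω₀ ω hω₀K hωK).2 (hmin ω₀ hω₀Γ)
      · rintro ⟨hK, hΓ⟩
        exact ⟨hΓ, fun ω' _ => hle K ω ω' hK⟩
    · -- G3
      intro K Γ hne
      rw [hComp]
      exact (hMF K).2 Γ hne
    · -- G4
      intro K₁ K₂ Γ₁ Γ₂ hK hΓ
      rw [hComp, hComp, hΓ, hF3 K₁ K₂ hK]
    · -- G5
      intro K Γ₁ Γ₂ ω hω
      rw [hComp] at hω
      obtain ⟨⟨h1', hmin⟩, h2'⟩ := hω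
      rw [hComp, mod_union]
      exact ⟨⟨h1', h2'⟩, fun ω' hω' => hmin ω' hω'.1⟩
    · -- G6
      intro K Γ₁ Γ₂ hne
      rw [hComp] at hne ⊢
      rw [hComp, mod_union]
      obtain ⟨ω₀, hω₀min, hω₀2⟩ := hne
      rintro ω ⟨⟨hω1, hω2⟩, hmin⟩
      have hr : a K ω ω₀ := hmin ω₀ ⟨hω₀min.1, hω₀2⟩
      exact ⟨(hMF K).1 Γ₁ ω₀ ω hω₀min.1 hω1 hr hω₀min, hω2⟩

end BeliefRev
end

section
/- Abstract representation theorem: a semantic base change function R is implemented by some base change operator satisfying (G1)–(G6) if and only if R is represented by some min-expressible and min-friendly faithful assignment. -/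
namespace BeliefRev

variable {L Ω : Type*}

section Aux

variable {L' Ω' : Type*} [DecidableEq L'] (sat : Ω' → L' → Prop)

lemma Mod_union_eq (K Γ : Finset L') :
    Mod sat (K ∪ Γ) = Mod sat K ∩ Mod sat Γ := by
  ext ω
  simp only [Mod, Set.mem_setOf_eq, Set.mem_inter_iff, Finset.mem_union, or_imp, forall_and]

lemma Mod_empty_eq : Mod sat (∅ : Finset L') = (Set.univ : Set Ω') := by
  ext ω; simp [Mod]

lemma mem_minSet {S : Set Ω'} {r : Ω' → Ω' → Prop} {ω : Ω'} :
    ω ∈ minSet S r ↔ ω ∈ S ∧ ∀ ω' ∈ S, r ω ω' := Iff.rfl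

/-- Key forward lemma: the canonical relation recovers the operator. -/
lemma canonical_minSet {op : Finset L' → Finset L' → Finset L'}
    (h : AGM sat op) (K Γ : Finset L') :
    minSet (Mod sat Γ) (canonicalRel sat op K) = Mod sat (op K Γ) := by
  obtain ⟨h1, _h2, h3, _h4, h5, h6⟩ := h
  apply Set.Subset.antisymm
  · rintro ω ⟨hωΓ, hmin⟩
    obtain ⟨ω', hω'⟩ := h3 K Γ ⟨ω, hωΓ⟩
    have := hmin ω' (h1 K Γ hω') Γ hωΓ (h1 K Γ hω')
    rcases this with h | h
    · exact h
    · exact absurd hω' h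
  · intro ω hω
    refine ⟨h1 K Γ hω, fun ω' hω' Γ' hA hB => ?_⟩
    by_cases hc : ω' ∈ Mod sat (op K Γ')
    · left
      have hx : ω ∈ Mod sat (op K Γ) ∩ Mod sat Γ' := ⟨hω, hA⟩
      have hcup : ω ∈ Mod sat (op K (Γ ∪ Γ')) := h5 K Γ Γ' hx
      rw [Finset.union_comm] at hcup
      have := h6 K Γ' Γ ⟨ω', hc, hω'⟩ hcup
      exact this.1
    · right; exact hc

lemma canonical_total {op : Finset L' → Finset L' → Finset L'}
    (h : AGM sat op) (K : Finset L') : TotalRel (canonicalRel sat op K) := by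
  obtain ⟨_h1, _h2, _h3, _h4, h5, h6⟩ := h
  intro ω₁ ω₂
  by_cases hc : canonicalRel sat op K ω₁ ω₂
  · left; exact hc
  · right
    simp only [canonicalRel, not_forall, not_or, not_not] at hc
    obtain ⟨Γ₁, hm1, hm2, hn1, hy2⟩ := hc
    intro Γ hb2 hb1
    by_contra hgoal
    push_neg at hgoal
    obtain ⟨hn2, hy1⟩ := hgoal
    have hx : ω₂ ∈ Mod sat (op K Γ₁) ∩ Mod sat Γ := ⟨hy2, hb2⟩
    have hcup : ω₂ ∈ Mod sat (op K (Γ₁ ∪ Γ)) := h5 K Γ₁ Γ hx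
    rw [Finset.union_comm] at hcup
    have := h6 K Γ Γ₁ ⟨ω₁, hy1, hm1⟩ hcup
    exact hn2 this.1

end Aux

/-- Abstract representation theorem: a semantic base change
function `R` is implemented by some operator satisfying (G1)–(G6) iff `R` is
represented by some min-expressible min-friendly faithful assignment. -/
theorem abstract_representation_theorem {L Ω : Type*} [DecidableEq L]
    (sat : Ω → L → Prop) (R : Finset L → Finset L → Set Ω) :
    (∃ op : Finset L → Finset L → Finset L, AGM sat op ∧
        ∀ K Γ : Finset L, Mod sat (op K Γ) = R K Γ) ↔
      (∃ assign : Finset L → Ω → Ω → Prop,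
        IsAssignment assign ∧
        (∀ K : Finset L, MinExpressible sat (assign K)) ∧
        (∀ K : Finset L, MinFriendly sat (assign K)) ∧
        Faithful sat assign ∧
        ∀ K Γ : Finset L, minSet (Mod sat Γ) (assign K) = R K Γ) := by
  constructor
  · rintro ⟨op, hAGM, hR⟩
    obtain ⟨h1, h2, h3, h4, h5, h6⟩ := hAGM
    refine ⟨canonicalRel sat op, fun K => canonical_total sat ⟨h1, h2, h3, h4, h5, h6⟩ K,
      fun K Γ => ⟨op K Γ, (canonical_minSet sat ⟨h1, h2, h3, h4, h5, h6⟩ K Γ).symm⟩,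
      ?_, ?_, ?_⟩
    · -- min-friendly
      intro K
      constructor
      · intro Γ ω ω' hωΓ hω'Γ hrel hmin
        rw [canonical_minSet sat ⟨h1, h2, h3, h4, h5, h6⟩ K Γ] at hmin ⊢
        rcases hrel Γ hω'Γ hωΓ with h | h
        · exact h
        · exact absurd hmin h
      · intro Γ hne
        rw [canonical_minSet sat ⟨h1, h2, h3, h4, h5, h6⟩ K Γ]
        exact h3 K Γ hne
    · -- faithful
      refine ⟨?_, ?_, ?_⟩
      · -- F1
        rintro K ω ω' hω hω' ⟨_, hns⟩
        apply hns
        intro Γ h1' h2'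
        left
        have hne : (Mod sat (K ∪ Γ)).Nonempty := by
          rw [Mod_union_eq]; exact ⟨ω', hω', h1'⟩
        rw [h2 K Γ hne, Mod_union_eq]
        exact ⟨hω', h1'⟩
      · -- F2
        intro K ω ω' hω hω'
        constructor
        · intro Γ hA hB
          left
          have hne : (Mod sat (K ∪ Γ)).Nonempty := by
            rw [Mod_union_eq]; exact ⟨ω, hω, hA⟩
          rw [h2 K Γ hne, Mod_union_eq]
          exact ⟨hω, hA⟩
        · intro hcon
          have hu : ω' ∈ Mod sat (∅ : Finset L) := by rw [Mod_empty_eq]; trivial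
          have hu' : ω ∈ Mod sat (∅ : Finset L) := by rw [Mod_empty_eq]; trivial
          have hne : (Mod sat (K ∪ (∅ : Finset L))).Nonempty := by
            rw [Mod_union_eq, Mod_empty_eq]; exact ⟨ω, hω, trivial⟩
          have heq := h2 K ∅ hne
          rw [Mod_union_eq, Mod_empty_eq, Set.inter_univ] at heq
          rcases hcon ∅ hu hu' with h | h
          · rw [heq] at h; exact hω' h
          · rw [heq] at h; exact h hω
      · -- F3
        intro K K' hKK'
        funext ω₁ ω₂
        have key : ∀ Γ, Mod sat (op K Γ) = Mod sat (op K' Γ) := fun Γ => h4 K K' Γ Γ hKK' rfl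
        apply propext
        constructor <;> intro h Γ hA hB <;> have := h Γ hA hB <;>
          [rw [← key]; rw [key]] <;> exact this
    · -- representation
      intro K Γ
      rw [canonical_minSet sat ⟨h1, h2, h3, h4, h5, h6⟩ K Γ, hR]
  · rintro ⟨assign, htotal, hexp, hfriendly, ⟨hF1, hF2, hF3⟩, hrep⟩
    refine ⟨fun K Γ => (hexp K Γ).choose, ?_, fun K Γ => by
      rw [(hexp K Γ).choose_spec, hrep]⟩
    have hmod : ∀ K Γ, Mod sat ((hexp K Γ).choose) = minSet (Mod sat Γ) (assign K) :=
      fun K Γ => (hexp K Γ).choose_spec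
    -- a helper: models of K are ⪯_K-below everything
    have hbelow : ∀ (K : Finset L) (ω ω' : Ω), ω ∈ Mod sat K → assign K ω ω' := by
      intro K ω ω' hω
      by_cases hω' : ω' ∈ Mod sat K
      · rcases htotal K ω ω' with h | h
        · exact h
        · by_contra hn
          exact hF1 K ω' ω hω' hω ⟨h, hn⟩
      · exact (hF2 K ω ω' hω hω').1
    refine ⟨?_, ?_, ?_, ?_, ?_, ?_⟩
    · -- G1
      intro K Γ
      rw [hmod]
      exact fun ω hω => hω.1
    · -- G2
      intro K Γ hne
      rw [hmod, Mod_union_eq] at *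
      apply Set.Subset.antisymm
      · rintro ω ⟨hωΓ, hmin⟩
        obtain ⟨ω₀, hω₀K, hω₀Γ⟩ := hne
        constructor
        · by_contra hωK
          exact (hF2 K ω₀ ω hω₀K hωK).2 (hmin ω₀ hω₀Γ)
        · exact hωΓ
      · rintro ω ⟨hωK, hωΓ⟩
        exact ⟨hωΓ, fun ω' _ => hbelow K ω ω' hωK⟩
    · -- G3
      intro K Γ hne
      rw [hmod]
      exact (hfriendly K).2 Γ hne
    · -- G4
      intro K₁ K₂ Γ₁ Γ₂ hK hΓ
      rw [hmod, hmod, hΓ, hF3 K₁ K₂ hK]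
    · -- G5
      intro K Γ₁ Γ₂
      rintro ω ⟨hω1, hω2⟩
      rw [hmod] at hω1 ⊢
      rw [Mod_union_eq]
      obtain ⟨hωΓ₁, hmin⟩ := hω1
      exact ⟨⟨hωΓ₁, hω2⟩, fun ω' hω' => hmin ω' hω'.1⟩
    · -- G6
      intro K Γ₁ Γ₂ hne
      rw [hmod K Γ₁] at hne
      rw [hmod K (Γ₁ ∪ Γ₂), hmod K Γ₁, Mod_union_eq]
      obtain ⟨ω₀, hω₀min, hω₀Γ₂⟩ := hne
      rintro ω ⟨⟨hωΓ₁, hωΓ₂⟩, hmin⟩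
      have hrelω₀ : assign K ω ω₀ := hmin ω₀ ⟨hω₀min.1, hω₀Γ₂⟩
      exact ⟨(hfriendly K).1 Γ₁ ω₀ ω hω₀min.1 hωΓ₁ hrelω₀ hω₀min, hωΓ₂⟩

end BeliefRev
end

section
/- If a logic 𝕃 exhibits a critical loop, then there exists a base change operator ∘ for 𝕃 satisfying (G1)–(G6) that is not total preorder representable. -/
namespace BeliefRev

variable {L Ω : Type*}

/-!
The operator is described on model sets: revising `K` by `Γ` keeps `Mod Γ ∩ κ` for a suitable
expressible `κ`, and (G5)/(G6) then amount to the coherence `f (S ∩ T) = f S ∩ T` whenever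
`f S` meets `T`. Every `K` other than the `K` of the critical loop gets full meet revision. For
that `K`, revision keeps `Mod K` if possible; otherwise the well-order-first base consistent with
`Γ` whose models avoid `Γ₀ ∪ Γ₁ ∪ Γ₂`; otherwise it chooses cyclically, keeping `Γ'ᵢ` when `Γ`
meets `Γ'ᵢ` but not `Γ'ᵢ₊₁`. Condition (3) of a critical loop says that the cyclic choice is only
reached by sets meeting at most two of the `Γ'ᵢ`, and there it is coherent. Revising by `Γᵢ`
keeps exactly `Γᵢ ∩ Γ'ᵢ`, so for `ωᵢ ∈ Γ'ᵢ` any compatible transitive relation has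
`ω₀ ⪯ ω₂ ⪯ ω₁ ⪯ Mod Γ₁`, which would put `ω₀` into the revision by `Γ₁`.
-/

open Set

theorem Mod_union [DecidableEq L] (sat : Ω → L → Prop) (A B : Finset L) :
    Mod sat (A ∪ B) = Mod sat A ∩ Mod sat B := by
  ext ω
  simp [Mod, or_imp, forall_and]

theorem Mod_empty (sat : Ω → L → Prop) : Mod sat ∅ = univ := by
  ext ω
  simp [Mod]

section Selection

def IsCoherentOn (f : Set Ω → Set Ω) (D : Set (Set Ω)) : Prop :=
  ∀ S ∈ D, ∀ T, (f S ∩ T).Nonempty → f (S ∩ T) = f S ∩ T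

structure IsSelection (A : Set (Set Ω)) (f : Set Ω → Set Ω) : Prop where
  exists_eq_inter : ∀ S, ∃ κ ∈ A, f S = S ∩ κ
  nonempty : ∀ S, S.Nonempty → (f S).Nonempty

variable {A D : Set (Set Ω)} {f g : Set Ω → Set Ω} {κ S T : Set Ω}

theorem isSelection_id (huniv : univ ∈ A) : IsSelection A id where
  exists_eq_inter S := ⟨univ, huniv, (inter_univ S).symm⟩
  nonempty _ hS := hS

theorem IsCoherentOn.mono {D' : Set (Set Ω)} (hf : IsCoherentOn f D) (h : D' ⊆ D) :
    IsCoherentOn f D' :=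
  fun S hS => hf S (h hS)

theorem IsSelection.subset (hf : IsSelection A f) (S : Set Ω) : f S ⊆ S := by
  obtain ⟨κ, -, hκ⟩ := hf.exists_eq_inter S
  exact hκ ▸ inter_subset_left

theorem nonempty_inter_of_nonempty_inter_inter (h : (S ∩ T ∩ κ).Nonempty) : (S ∩ κ).Nonempty :=
  h.mono (inter_subset_inter_left κ inter_subset_left)

open Classical in
noncomputable def preferring (κ : Set Ω) (g : Set Ω → Set Ω) (S : Set Ω) : Set Ω :=
  if (S ∩ κ).Nonempty then S ∩ κ else g S

theorem preferring_of_nonempty (h : (S ∩ κ).Nonempty) : preferring κ g S = S ∩ κ :=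
  if_pos h

theorem preferring_of_not_nonempty (h : ¬ (S ∩ κ).Nonempty) : preferring κ g S = g S :=
  if_neg h

theorem isSelection_preferring (hg : IsSelection A g) (hκ : κ ∈ A) :
    IsSelection A (preferring κ g) where
  exists_eq_inter S := by
    by_cases h : (S ∩ κ).Nonempty
    · exact ⟨κ, hκ, preferring_of_nonempty h⟩
    · rw [preferring_of_not_nonempty h]
      exact hg.exists_eq_inter S
  nonempty S hS := by
    by_cases h : (S ∩ κ).Nonempty
    · rwa [preferring_of_nonempty h]
    · rw [preferring_of_not_nonempty h]
      exact hg.nonempty S hS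

theorem isCoherentOn_preferring (hg : IsCoherentOn g (D ∩ {S | ¬ (S ∩ κ).Nonempty})) :
    IsCoherentOn (preferring κ g) D := by
  intro S hS T hN
  by_cases h : (S ∩ κ).Nonempty
  · rw [preferring_of_nonempty h] at hN ⊢
    rw [← inter_right_comm] at hN
    rw [preferring_of_nonempty hN, inter_right_comm]
  · have h' : ¬ (S ∩ T ∩ κ).Nonempty := fun h' =>
      h (nonempty_inter_of_nonempty_inter_inter h')
    rw [preferring_of_not_nonempty h] at hN ⊢
    rw [preferring_of_not_nonempty h', hg S ⟨hS, h⟩ T hN]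

section PreferFirst

variable {ι : Type*} {r : ι → ι → Prop} (wf : WellFounded r) (C : ι → Set Ω)

open Classical in
noncomputable def preferFirst (g : Set Ω → Set Ω) (S : Set Ω) : Set Ω :=
  if h : ∃ i, (S ∩ C i).Nonempty then S ∩ C (wf.min {i | (S ∩ C i).Nonempty} h)
  else g S

variable {wf C}

theorem preferFirst_of_forall_not_nonempty (h : ∀ i, ¬ (S ∩ C i).Nonempty) :
    preferFirst wf C g S = g S :=
  dif_neg (not_exists.2 h)

theorem isSelection_preferFirst (hg : IsSelection A g) (hC : ∀ i, C i ∈ A) :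
    IsSelection A (preferFirst wf C g) where
  exists_eq_inter S := by
    unfold preferFirst
    split_ifs with h
    · exact ⟨_, hC _, rfl⟩
    · exact hg.exists_eq_inter S
  nonempty S hS := by
    unfold preferFirst
    split_ifs with h
    · exact wf.min_mem {i | (S ∩ C i).Nonempty} h
    · exact hg.nonempty S hS

theorem isCoherentOn_preferFirst [Std.Trichotomous r]
    (hg : IsCoherentOn g (D ∩ {S | ∀ i, ¬ (S ∩ C i).Nonempty})) :
    IsCoherentOn (preferFirst wf C g) D := by
  intro S hS T hN
  by_cases h : ∃ i, (S ∩ C i).Nonempty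
  · set i₀ := wf.min {i | (S ∩ C i).Nonempty} h
    have hS₀ : preferFirst wf C g S = S ∩ C i₀ := dif_pos h
    rw [hS₀, ← inter_right_comm] at hN
    have hT : ∃ i, (S ∩ T ∩ C i).Nonempty := ⟨i₀, hN⟩
    have hmin : wf.min {i | (S ∩ T ∩ C i).Nonempty} hT = i₀ :=
      wf.min_eq_of_forall_not_lt hN fun i hi =>
        wf.not_lt_min _ (nonempty_inter_of_nonempty_inter_inter hi)
    rw [hS₀, preferFirst, dif_pos hT, hmin, inter_right_comm]
  · have hT : ∀ i, ¬ (S ∩ T ∩ C i).Nonempty := fun i hi =>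
      h ⟨i, nonempty_inter_of_nonempty_inter_inter hi⟩
    rw [preferFirst_of_forall_not_nonempty (not_exists.1 h)] at hN ⊢
    rw [preferFirst_of_forall_not_nonempty hT, hg S ⟨hS, not_exists.1 h⟩ T hN]

end PreferFirst

section Cycle

variable (M₀ M₁ M₂ : Set Ω)

open Classical in
noncomputable def cycleSel (S : Set Ω) : Set Ω :=
  if (S ∩ M₀).Nonempty ∧ ¬ (S ∩ M₁).Nonempty then S ∩ M₀
  else if (S ∩ M₁).Nonempty ∧ ¬ (S ∩ M₂).Nonempty then S ∩ M₁
  else if (S ∩ M₂).Nonempty ∧ ¬ (S ∩ M₀).Nonempty then S ∩ M₂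
  else S

variable {M₀ M₁ M₂}

theorem cycleSel_eq_inter_zero (h₀ : (S ∩ M₀).Nonempty) (h₁ : ¬ (S ∩ M₁).Nonempty) :
    cycleSel M₀ M₁ M₂ S = S ∩ M₀ :=
  if_pos ⟨h₀, h₁⟩

theorem cycleSel_eq_inter_one (h₁ : (S ∩ M₁).Nonempty) (h₂ : ¬ (S ∩ M₂).Nonempty) :
    cycleSel M₀ M₁ M₂ S = S ∩ M₁ := by
  simp [cycleSel, h₁, h₂]

theorem cycleSel_eq_inter_two (h₂ : (S ∩ M₂).Nonempty) (h₀ : ¬ (S ∩ M₀).Nonempty) :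
    cycleSel M₀ M₁ M₂ S = S ∩ M₂ := by
  simp [cycleSel, h₂, h₀]

theorem cycleSel_of_not_nonempty (h₀ : ¬ (S ∩ M₀).Nonempty) (h₁ : ¬ (S ∩ M₁).Nonempty)
    (h₂ : ¬ (S ∩ M₂).Nonempty) : cycleSel M₀ M₁ M₂ S = S := by
  simp [cycleSel, h₀, h₁, h₂]

theorem isSelection_cycleSel (h₀ : M₀ ∈ A) (h₁ : M₁ ∈ A) (h₂ : M₂ ∈ A) (huniv : univ ∈ A) :
    IsSelection A (cycleSel M₀ M₁ M₂) where
  exists_eq_inter S := by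
    unfold cycleSel
    split_ifs
    exacts [⟨M₀, h₀, rfl⟩, ⟨M₁, h₁, rfl⟩, ⟨M₂, h₂, rfl⟩, ⟨univ, huniv, (inter_univ S).symm⟩]
  nonempty S hS := by
    unfold cycleSel
    split_ifs with h h' h''
    exacts [h.1, h'.1, h''.1, hS]

theorem isCoherentOn_cycleSel : IsCoherentOn (cycleSel M₀ M₁ M₂)
    {S | ¬ ((S ∩ M₀).Nonempty ∧ (S ∩ M₁).Nonempty ∧ (S ∩ M₂).Nonempty)} := by
  intro S (hS : ¬ _) T hN
  have hmono : ∀ {M}, ¬ (S ∩ M).Nonempty → ¬ (S ∩ T ∩ M).Nonempty :=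
    fun h h' => h (nonempty_inter_of_nonempty_inter_inter h')
  by_cases h₀ : (S ∩ M₀).Nonempty ∧ ¬ (S ∩ M₁).Nonempty
  · rw [cycleSel_eq_inter_zero h₀.1 h₀.2, ← inter_right_comm] at hN ⊢
    rw [cycleSel_eq_inter_zero hN (hmono h₀.2)]
  by_cases h₁ : (S ∩ M₁).Nonempty ∧ ¬ (S ∩ M₂).Nonempty
  · rw [cycleSel_eq_inter_one h₁.1 h₁.2, ← inter_right_comm] at hN ⊢
    rw [cycleSel_eq_inter_one hN (hmono h₁.2)]
  by_cases h₂ : (S ∩ M₂).Nonempty ∧ ¬ (S ∩ M₀).Nonempty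
  · rw [cycleSel_eq_inter_two h₂.1 h₂.2, ← inter_right_comm] at hN ⊢
    rw [cycleSel_eq_inter_two hN (hmono h₂.2)]
  obtain ⟨n₀, n₁, n₂⟩ :
      ¬ (S ∩ M₀).Nonempty ∧ ¬ (S ∩ M₁).Nonempty ∧ ¬ (S ∩ M₂).Nonempty := by
    tauto
  rw [cycleSel_of_not_nonempty n₀ n₁ n₂,
    cycleSel_of_not_nonempty (hmono n₀) (hmono n₁) (hmono n₂)]

end Cycle

end Selection

section SelectionOperator

variable (sat : Ω → L → Prop) (sel : Set Ω → Set Ω → Set Ω)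

noncomputable def selOp (K Γ : Finset L) : Finset L :=
  Classical.epsilon fun B => Mod sat B = sel (Mod sat K) (Mod sat Γ)

variable [DecidableEq L] {sat sel}

theorem Mod_selOp (hsel : ∀ K : Finset L, IsSelection (range (Mod sat)) (sel (Mod sat K)))
    (K Γ : Finset L) : Mod sat (selOp sat sel K Γ) = sel (Mod sat K) (Mod sat Γ) := by
  obtain ⟨_, ⟨B, rfl⟩, hB⟩ := (hsel K).exists_eq_inter (Mod sat Γ)
  exact Classical.epsilon_spec (p := fun B => Mod sat B = sel (Mod sat K) (Mod sat Γ))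
    ⟨Γ ∪ B, by rw [Mod_union, hB]⟩

theorem agm_selOp (hsel : ∀ K : Finset L, IsSelection (range (Mod sat)) (sel (Mod sat K)))
    (hcons : ∀ κ S, (S ∩ κ).Nonempty → sel κ S = S ∩ κ)
    (hcoh : ∀ K : Finset L, IsCoherentOn (sel (Mod sat K)) (range (Mod sat))) :
    AGM sat (selOp sat sel) := by
  have hmerge : ∀ K Γ₁ Γ₂ : Finset L, (Mod sat (selOp sat sel K Γ₁) ∩ Mod sat Γ₂).Nonempty →
      Mod sat (selOp sat sel K (Γ₁ ∪ Γ₂)) = Mod sat (selOp sat sel K Γ₁) ∩ Mod sat Γ₂ := by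
    intro K Γ₁ Γ₂ h
    rw [Mod_selOp hsel] at h ⊢
    rw [Mod_selOp hsel, Mod_union, hcoh K _ ⟨Γ₁, rfl⟩ _ h]
  refine ⟨fun K Γ => ?_, fun K Γ h => ?_, fun K Γ h => ?_, fun K₁ K₂ Γ₁ Γ₂ hK hΓ => ?_,
    fun K Γ₁ Γ₂ ω hω => ?_, fun K Γ₁ Γ₂ h => (hmerge K Γ₁ Γ₂ h).le⟩
  · exact Mod_selOp hsel K Γ ▸ (hsel K).subset _
  · rw [Mod_union, inter_comm] at h ⊢
    rw [Mod_selOp hsel, hcons _ _ h]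
  · exact Mod_selOp hsel K Γ ▸ (hsel K).nonempty _ h
  · rw [Mod_selOp hsel, Mod_selOp hsel, hK, hΓ]
  · exact hmerge K Γ₁ Γ₂ ⟨ω, hω⟩ ▸ hω

end SelectionOperator

theorem not_totalPreorderRepresentable_of_cycle {sat : Ω → L → Prop}
    {op : Finset L → Finset L → Finset L} {K Γ₀ Γ₁ Γ₂ : Finset L} {ω₀ ω₁ ω₂ : Ω}
    (h₀ : ω₀ ∈ Mod sat (op K Γ₀)) (h₁ : ω₁ ∈ Mod sat (op K Γ₁)) (h₂ : ω₂ ∈ Mod sat (op K Γ₂))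
    (h₂₀ : ω₂ ∈ Mod sat Γ₀) (h₁₂ : ω₁ ∈ Mod sat Γ₂) (h₀₁ : ω₀ ∈ Mod sat Γ₁)
    (hne : ω₀ ∉ Mod sat (op K Γ₁)) : ¬ TotalPreorderRepresentable sat op := by
  rintro ⟨assign, -, -, -, htrans, hcompat⟩
  rw [hcompat] at h₀ h₁ h₂ hne
  have h₀₁' : assign K ω₀ ω₁ := htrans K (h₀.2 ω₂ h₂₀) (h₂.2 ω₁ h₁₂)
  exact hne ⟨h₀₁, fun ω hω => htrans K h₀₁' (h₁.2 ω hω)⟩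

section CriticalLoop

variable (sat : Ω → L → Prop) (κ₀ X M₀ M₁ M₂ : Set Ω)

open Classical in
noncomputable def loopSel (κ : Set Ω) : Set Ω → Set Ω :=
  preferring κ <|
    if κ = κ₀ then
      preferFirst (IsWellFounded.wf (r := WellOrderingRel))
        (fun B : {B : Finset L // Disjoint (Mod sat B) X} => Mod sat B.1) (cycleSel M₀ M₁ M₂)
    else id

variable {sat κ₀ X M₀ M₁ M₂}

theorem isSelection_loopSel (h₀ : M₀ ∈ range (Mod sat)) (h₁ : M₁ ∈ range (Mod sat))
    (h₂ : M₂ ∈ range (Mod sat)) (K : Finset L) :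
    IsSelection (range (Mod sat)) (loopSel sat κ₀ X M₀ M₁ M₂ (Mod sat K)) := by
  have huniv : univ ∈ range (Mod sat) := ⟨∅, Mod_empty sat⟩
  refine isSelection_preferring ?_ ⟨K, rfl⟩
  split_ifs
  · exact isSelection_preferFirst (isSelection_cycleSel h₀ h₁ h₂ huniv) fun B => ⟨B.1, rfl⟩
  · exact isSelection_id huniv

theorem isCoherentOn_loopSel [DecidableEq L] {G₀ G₁ G₂ : Finset L}
    (hloop : ∀ Γ : Finset L, (Mod sat (G₀ ∪ Γ)).Nonempty → (Mod sat (G₁ ∪ Γ)).Nonempty →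
      (Mod sat (G₂ ∪ Γ)).Nonempty →
      ∃ Γ' : Finset L, (Mod sat Γ').Nonempty ∧ Mod sat Γ' ⊆ Mod sat Γ \ X)
    (κ : Set Ω) :
    IsCoherentOn (loopSel sat κ₀ X (Mod sat G₀) (Mod sat G₁) (Mod sat G₂) κ) (range (Mod sat)) := by
  refine isCoherentOn_preferring ?_
  split_ifs
  · refine isCoherentOn_preferFirst <| isCoherentOn_cycleSel.mono ?_
    rintro _ ⟨⟨⟨Γ, rfl⟩, -⟩, hout⟩ ⟨h₀, h₁, h₂⟩
    obtain ⟨Γ', ⟨ω, hω⟩, hsub⟩ := hloop Γ (by rwa [Mod_union, inter_comm])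
      (by rwa [Mod_union, inter_comm]) (by rwa [Mod_union, inter_comm])
    exact hout ⟨Γ', disjoint_left.2 fun _ hω => (hsub hω).2⟩ ⟨ω, (hsub hω).1, hω⟩
  · exact fun _ _ _ _ => rfl

theorem loopSel_of_subset {S : Set Ω} (hκ₀ : S ∩ κ₀ = ∅) (hX : S ⊆ X) :
    loopSel sat κ₀ X M₀ M₁ M₂ κ₀ S = cycleSel M₀ M₁ M₂ S := by
  rw [loopSel, preferring_of_not_nonempty (not_nonempty_iff_eq_empty.2 hκ₀), if_pos rfl,
    preferFirst_of_forall_not_nonempty]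
  rintro B ⟨ω, hωS, hωB⟩
  exact disjoint_left.1 B.2 hωB (hX hωS)

end CriticalLoop

/-- If the logic exhibits a critical loop, then there is a base
change operator satisfying (G1)–(G6) that is not total preorder representable. -/
theorem exists_non_representable_of_criticalLoop {L Ω : Type*} [DecidableEq L]
    (sat : Ω → L → Prop) (h : AdmitsCriticalLoop sat) :
    ∃ op : Finset L → Finset L → Finset L,
      AGM sat op ∧ ¬ TotalPreorderRepresentable sat op := by
  obtain ⟨Γ₀, Γ₁, Γ₂, K, G₀, G₁, G₂, ⟨hK₀, hK₁, hK₂⟩, ⟨⟨ω₀, hω₀⟩, hG₀⟩, ⟨⟨ω₁, hω₁⟩, hG₁⟩,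
    ⟨⟨ω₂, hω₂⟩, hG₂⟩, hloop⟩ := h
  set X := Mod sat Γ₀ ∪ Mod sat Γ₁ ∪ Mod sat Γ₂
  set sel := loopSel sat (Mod sat K) X (Mod sat G₀) (Mod sat G₁) (Mod sat G₂)
  have hsel : ∀ K', IsSelection (range (Mod sat)) (sel (Mod sat K')) :=
    isSelection_loopSel ⟨G₀, rfl⟩ ⟨G₁, rfl⟩ ⟨G₂, rfl⟩
  refine ⟨selOp sat sel, agm_selOp hsel (fun _ _ => preferring_of_nonempty)
    fun _ => isCoherentOn_loopSel hloop _, ?_⟩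
  have e₀ : Mod sat (selOp sat sel K Γ₀) = Mod sat Γ₀ ∩ Mod sat G₀ := by
    rw [Mod_selOp hsel]
    exact (loopSel_of_subset (by rwa [inter_comm, ← Mod_union])
      (subset_union_left.trans subset_union_left)).trans <|
      cycleSel_eq_inter_zero ⟨ω₀, (hG₀ hω₀).1.1, hω₀⟩ fun ⟨_, hΓ, hG⟩ => (hG₁ hG).2 hΓ
  have e₁ : Mod sat (selOp sat sel K Γ₁) = Mod sat Γ₁ ∩ Mod sat G₁ := by
    rw [Mod_selOp hsel]
    exact (loopSel_of_subset (by rwa [inter_comm, ← Mod_union])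
      (subset_union_right.trans subset_union_left)).trans <|
      cycleSel_eq_inter_one ⟨ω₁, (hG₁ hω₁).1.1, hω₁⟩ fun ⟨_, hΓ, hG⟩ => (hG₂ hG).2 hΓ
  have e₂ : Mod sat (selOp sat sel K Γ₂) = Mod sat Γ₂ ∩ Mod sat G₂ := by
    rw [Mod_selOp hsel]
    exact (loopSel_of_subset (by rwa [inter_comm, ← Mod_union]) subset_union_right).trans <|
      cycleSel_eq_inter_two ⟨ω₂, (hG₂ hω₂).1.1, hω₂⟩ fun ⟨_, hΓ, hG⟩ => (hG₀ hG).2 hΓ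
  refine not_totalPreorderRepresentable_of_cycle (K := K) ?_ ?_ ?_ (hG₂ hω₂).1.2 (hG₁ hω₁).1.2
    (hG₀ hω₀).1.2 ?_ <;> simp only [e₀, e₁, e₂]
  exacts [⟨(hG₀ hω₀).1.1, hω₀⟩, ⟨(hG₁ hω₁).1.1, hω₁⟩, ⟨(hG₂ hω₂).1.1, hω₂⟩,
    fun h => (hG₁ h.2).2 (hG₀ hω₀).1.1]

end BeliefRev
end

section
/- A disjunctive logic never exhibits a critical loop; that is, if 𝕃 is disjunctive, then no triple of belief bases Γ₀, Γ₁, Γ₂ forms a critical loop for 𝕃. -/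
namespace BeliefRev

variable {L Ω : Type*}

/-- A disjunctive logic never exhibits a critical loop. -/
theorem disjunctive_no_criticalLoop {L Ω : Type*} [DecidableEq L]
    (sat : Ω → L → Prop) (hd : Disjunctive sat) :
    ∀ Γ₀ Γ₁ Γ₂ : Finset L, ¬ CriticalLoop sat Γ₀ Γ₁ Γ₂ := by
  have modUnion : ∀ A B : Finset L, Mod sat (A ∪ B) = Mod sat A ∩ Mod sat B := by
    intro A B
    ext ω
    simp only [Mod, Set.mem_setOf_eq, Finset.mem_union, Set.mem_inter_iff]
    constructor
    · intro h; exact ⟨fun φ hφ => h φ (Or.inl hφ), fun φ hφ => h φ (Or.inr hφ)⟩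
    · rintro ⟨h1, h2⟩ φ (hφ | hφ); exacts [h1 φ hφ, h2 φ hφ]
  rintro Γ₀ Γ₁ Γ₂ ⟨K, G0, G1, G2, _, ⟨hn0, hs0⟩, ⟨hn1, hs1⟩, ⟨hn2, hs2⟩, hloop⟩
  obtain ⟨Δ01, hΔ01⟩ := hd G0 G1
  obtain ⟨Δ, hΔ⟩ := hd Δ01 G2
  have hΔeq : Mod sat Δ = Mod sat G0 ∪ Mod sat G1 ∪ Mod sat G2 := by
    rw [hΔ, hΔ01]
  have hsub : ∀ i : Finset L, Mod sat i ⊆ Mod sat Δ → (Mod sat i).Nonempty →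
      (Mod sat (i ∪ Δ)).Nonempty := by
    intro i hi ⟨ω, hω⟩
    exact ⟨ω, by rw [modUnion]; exact ⟨hω, hi hω⟩⟩
  have h0 : Mod sat G0 ⊆ Mod sat Δ := by rw [hΔeq]; intro ω h; exact Or.inl (Or.inl h)
  have h1 : Mod sat G1 ⊆ Mod sat Δ := by rw [hΔeq]; intro ω h; exact Or.inl (Or.inr h)
  have h2 : Mod sat G2 ⊆ Mod sat Δ := by rw [hΔeq]; intro ω h; exact Or.inr h
  obtain ⟨Γ', ⟨ω, hω⟩, hΓ'⟩ := hloop Δ (hsub _ h0 hn0) (hsub _ h1 hn1) (hsub _ h2 hn2)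
  have := hΓ' hω
  rcases this with ⟨hωΔ, hnot⟩
  rw [hΔeq] at hωΔ
  apply hnot
  rcases hωΔ with (h | h) | h
  · exact Or.inl (Or.inl (hs0 h).1.1)
  · exact Or.inl (Or.inr (hs1 h).1.1)
  · exact Or.inl (Or.inl (hs2 h).1.2)

end BeliefRev
end

section
/- Maximality of the canonical relation: let ∘ be a base change operator satisfying (G1)–(G6). If K ↦ ⪯_K is a min-friendly faithful assignment compatible with ∘, then for every belief base K and all ω₁, ω₂ ∈ Ω, ω₁ ⪯_K ω₂ implies ω₁ ⪯ᵒ_K ω₂. -/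
namespace BeliefRev

variable {L Ω : Type*}

/-- Maximality of the canonical relation: if `∘` satisfies
(G1)–(G6) and `K ↦ ⪯_K` is a min-friendly faithful assignment compatible
with `∘`, then `ω₁ ⪯_K ω₂` implies `ω₁ ⪯ᵒ_K ω₂`. -/
theorem canonicalRel_maximal {L Ω : Type*} [DecidableEq L]
    (sat : Ω → L → Prop) (op : Finset L → Finset L → Finset L) (h : AGM sat op)
    (assign : Finset L → Ω → Ω → Prop)
    (hA : IsAssignment assign)
    (hMF : ∀ K : Finset L, MinFriendly sat (assign K))
    (hF : Faithful sat assign)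
    (hC : Compatible sat op assign) :
    ∀ (K : Finset L) (ω₁ ω₂ : Ω), assign K ω₁ ω₂ → canonicalRel sat op K ω₁ ω₂ := by
  intro K ω₁ ω₂ h12 Γ h1 h2
  by_cases hm : ω₂ ∈ Mod sat (op K Γ)
  · left
    rw [hC K Γ] at hm ⊢
    exact (hMF K).1 Γ ω₂ ω₁ h2 h1 h12 hm
  · right; exact hm

end BeliefRev
end

section
/- Let Γ₁, …, Γₙ, Γ be belief bases with Mod(Γ) = Mod(Γ₁) ∪ … ∪ Mod(Γₙ), and let ⪯ be a min-retractive binary relation on Ω. Then there exists a set I ⊆ {1, …, n} such that min(Mod(Γ), ⪯) = ⋃_{i ∈ I} min(Mod(Γᵢ), ⪯). -/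
namespace BeliefRev

variable {L Ω : Type*}

/-- if `Mod(Γ) = Mod(Γ₁) ∪ … ∪ Mod(Γₙ)` and `⪯` is min-retractive,
then `min(Mod(Γ), ⪯)` is a union of some of the `min(Mod(Γᵢ), ⪯)`. -/
theorem minSet_union_of_minRetractive {L Ω : Type*} (sat : Ω → L → Prop)
    (n : ℕ) (Γs : Fin n → Finset L) (Γ : Finset L)
    (hU : Mod sat Γ = ⋃ i : Fin n, Mod sat (Γs i))
    (r : Ω → Ω → Prop) (hr : MinRetractive sat r) :
    ∃ I : Finset (Fin n),
      minSet (Mod sat Γ) r = ⋃ i ∈ I, minSet (Mod sat (Γs i)) r := by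
  classical
  -- Each Mod (Γs i) is contained in Mod Γ.
  have hsub : ∀ i : Fin n, Mod sat (Γs i) ⊆ Mod sat Γ := by
    intro i ω hω
    rw [hU]
    exact Set.mem_iUnion.2 ⟨i, hω⟩
  refine ⟨Finset.univ.filter
    (fun i => (minSet (Mod sat (Γs i)) r ∩ minSet (Mod sat Γ) r).Nonempty), ?_⟩
  ext ω
  simp only [Set.mem_iUnion, Finset.mem_filter, Finset.mem_univ, true_and]
  constructor
  · rintro ⟨hωΓ, hmin⟩
    have : ω ∈ ⋃ i : Fin n, Mod sat (Γs i) := by rw [← hU]; exact hωΓ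
    obtain ⟨i, hi⟩ := Set.mem_iUnion.1 this
    have hωi : ω ∈ minSet (Mod sat (Γs i)) r :=
      ⟨hi, fun ω' hω' => hmin ω' (hsub i hω')⟩
    exact ⟨i, ⟨⟨ω, hωi, hωΓ, hmin⟩, hωi⟩⟩
  · rintro ⟨i, ⟨ω₀, hω₀i, hω₀Γ⟩, hωi, hωmin⟩
    exact hr Γ ω₀ ω (hsub i hω₀i.1) (hsub i hωi) (hωmin ω₀ hω₀i.1) hω₀Γ

end BeliefRev
end
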